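/- arXiv:2508.13622 — 5 statements merged into one kernel-verified Lean document; each statement's English description precedes it below -/
import Mathlib

section
/- For z, w in the open unit disk and x on the unit circle with z ≠ x, w ≠ x, z ≠ w, and z·conj(w) ≠ 1, letting Ψ(z,x) = −z(z+x)/(z−x), the quantity Π(z,w;x) := Re[−(Ψ(z,x)·conj(w) + z·conj(Ψ(w,x)))/(1 − z·conj(w))] + Re[−(Ψ(z,x) − Ψ(w,x))/(z − w)] equals −Re[(z+x)/(z−x)] · Re[(w+x)/(w−x)]. -/
set_option maxHeartbeats 1000000

/-- Vector field of the radial Loewner equation. -/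
noncomputable def Psi (z x : ℂ) : ℂ := -z * (z + x) / (z - x)

theorem stmt_2 (z w x : ℂ) (hz : ‖z‖ < 1) (hw : ‖w‖ < 1)
    (hx : ‖x‖ = 1) (hzx : z ≠ x) (hwx : w ≠ x) (hzw : z ≠ w)
    (h1 : z * (starRingEnd ℂ) w ≠ 1) :
    (-(Psi z x * (starRingEnd ℂ) w + z * (starRingEnd ℂ) (Psi w x))
        / (1 - z * (starRingEnd ℂ) w)).re
      + (-(Psi z x - Psi w x) / (z - w)).re
      = -(((z + x) / (z - x)).re * ((w + x) / (w - x)).re) := by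
  have hx0 : x ≠ 0 := by
    intro h; simp [h] at hx
  have hxc : (starRingEnd ℂ) x = x⁻¹ := by
    apply eq_inv_of_mul_eq_one_right
    rw [Complex.mul_conj]
    norm_cast
    simp [Complex.normSq_eq_norm_sq, hx]
  set c := (starRingEnd ℂ) z with hcdef
  set d := (starRingEnd ℂ) w with hddef
  set A := -(Psi z x * d + z * (starRingEnd ℂ) (Psi w x)) / (1 - z * d) with hA
  set B := -(Psi z x - Psi w x) / (z - w) with hB
  set a := (z + x) / (z - x) with ha
  set b := (w + x) / (w - x) with hb
  have hzx' : z - x ≠ 0 := sub_ne_zero.mpr hzx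
  have hwx' : w - x ≠ 0 := sub_ne_zero.mpr hwx
  have hzw' : z - w ≠ 0 := sub_ne_zero.mpr hzw
  have h1' : 1 - z * d ≠ 0 := sub_ne_zero.mpr (Ne.symm h1)
  have hczx : c - x⁻¹ ≠ 0 := by
    rw [← hxc, hcdef, sub_ne_zero]
    exact fun h => hzx ((starRingEnd ℂ).injective h)
  have hcwx : d - x⁻¹ ≠ 0 := by
    rw [← hxc, hddef, sub_ne_zero]
    exact fun h => hwx ((starRingEnd ℂ).injective h)
  have k1 : c * x - 1 ≠ 0 := by
    intro h
    apply hczx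
    have : (c * x - 1) / x = c - x⁻¹ := by field_simp
    rw [← this, h, zero_div]
  have k2 : d * x - 1 ≠ 0 := by
    intro h
    apply hcwx
    have : (d * x - 1) / x = d - x⁻¹ := by field_simp
    rw [← this, h, zero_div]
  have hcc : (starRingEnd ℂ) c = z := by rw [hcdef, Complex.conj_conj]
  have hdd : (starRingEnd ℂ) d = w := by rw [hddef, Complex.conj_conj]
  -- closed forms
  have eA : A = -2 * x * z * d / ((z - x) * (d * x - 1)) := by
    rw [hA]
    simp only [Psi, map_div₀, map_mul, map_add, map_sub, map_neg, hxc, ← hddef, hdd, hcc]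
    rw [div_eq_div_iff h1' (mul_ne_zero hzx' k2)]
    have k2x : x * d - 1 ≠ 0 := by rw [mul_comm]; exact k2
    have k1x : x * c - 1 ≠ 0 := by rw [mul_comm]; exact k1
    field_simp
    ring
  have eA' : (starRingEnd ℂ) A = -2 * x * c * w / ((c * x - 1) * (w - x)) := by
    rw [eA]
    simp only [map_div₀, map_mul, map_sub, map_neg, map_one, hxc, ← hcdef, ← hddef, hdd, hcc,
      map_ofNat]
    field_simp
  have eB : B = ((z - x) * (w - x) - 2 * x ^ 2) / ((z - x) * (w - x)) := by
    rw [hB]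
    simp only [Psi]
    rw [div_eq_div_iff hzw' (mul_ne_zero hzx' hwx')]
    field_simp
    ring
  have eB' : (starRingEnd ℂ) B = ((c * x - 1) * (d * x - 1) - 2) / ((c * x - 1) * (d * x - 1)) := by
    rw [eB]
    simp only [map_div₀, map_mul, map_sub, map_pow, map_ofNat, hxc, ← hcdef, ← hddef, hdd, hcc]
    field_simp
  have ea' : (starRingEnd ℂ) a = (c * x + 1) / (c * x - 1) := by
    rw [ha]
    simp only [map_div₀, map_add, map_sub, hxc, ← hcdef]
    field_simp
  have eb' : (starRingEnd ℂ) b = (d * x + 1) / (d * x - 1) := by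
    rw [hb]
    simp only [map_div₀, map_add, map_sub, hxc, ← hddef]
    field_simp
  have key : 2 * (A + (starRingEnd ℂ) A) + 2 * (B + (starRingEnd ℂ) B)
      = -((a + (starRingEnd ℂ) a) * (b + (starRingEnd ℂ) b)) := by
    rw [eA', eB', ea', eb', eA, eB, ha, hb]
    have k2x : x * d - 1 ≠ 0 := by rw [mul_comm]; exact k2
    have k1x : x * c - 1 ≠ 0 := by rw [mul_comm]; exact k1
    field_simp
    ring
  have hA2 : A + (starRingEnd ℂ) A = 2 * (A.re : ℂ) := by
    rw [Complex.add_conj]; push_cast; ring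
  have hB2 : B + (starRingEnd ℂ) B = 2 * (B.re : ℂ) := by
    rw [Complex.add_conj]; push_cast; ring
  have ha2 : a + (starRingEnd ℂ) a = 2 * (a.re : ℂ) := by
    rw [Complex.add_conj]; push_cast; ring
  have hb2 : b + (starRingEnd ℂ) b = 2 * (b.re : ℂ) := by
    rw [Complex.add_conj]; push_cast; ring
  rw [hA2, hB2, ha2, hb2] at key
  have keyR : 4 * A.re + 4 * B.re = -(4 * (a.re * b.re)) := by
    have : ((4 * A.re + 4 * B.re : ℝ) : ℂ) = ((-(4 * (a.re * b.re)) : ℝ) : ℂ) := by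
      push_cast
      linear_combination key
    exact_mod_cast this
  linarith
end

section
/- Let N ≥ 1 and let x_1, …, x_N be distinct nonzero complex numbers. Then as rational functions of z: ∑_{i,j=1}^N Ψ(z,x_j)/(z−x_i) = ∑_{i=1}^N [−2x_i²/(z−x_i)²] + ∑_{i=1}^N [−x_i/(z−x_i)]·(2·∑_{j≠i} (x_i+x_j)/(x_i−x_j) + N + 2) − N², where Ψ(z,x) = −z(z+x)/(z−x). -/
/-!
Split the double sum into its diagonal and off-diagonal parts and expand every term in partial
fractions in `z`. A diagonal term has a double pole at `x i`; an off-diagonal term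
`Psi z (x j) / (z - x i)` is `-1` plus simple poles at `x i` and at `x j`. Exchanging `i` and `j`
in the sum of the poles at `x j` collects all residues at `x i`, and the resulting coefficient
`(3 x i + x j) / (x i - x j)` equals `2 (x i + x j) / (x i - x j) + 1`.
-/

open Finset

theorem Finset.sum_sum_erase_comm {ι M : Type*} [Fintype ι] [DecidableEq ι] [AddCommMonoid M]
    (f : ι → ι → M) :
    ∑ i, ∑ j ∈ univ.erase i, f j i = ∑ i, ∑ j ∈ univ.erase i, f i j :=
  sum_comm' fun i j => by simp [ne_comm]

theorem Finset.sum_sum_erase_add_comm {ι M : Type*} [Fintype ι] [DecidableEq ι]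
    [AddCommMonoid M] (f g : ι → ι → M) :
    ∑ i, ∑ j ∈ univ.erase i, (f i j + g j i) = ∑ i, ∑ j ∈ univ.erase i, (f i j + g i j) := by
  simp only [sum_add_distrib, sum_sum_erase_comm g]

theorem Psi_div_sub_self {z x : ℂ} (h : z ≠ x) :
    Psi z x / (z - x) = -1 + (-x / (z - x)) * 3 - 2 * x ^ 2 / (z - x) ^ 2 := by
  have := sub_ne_zero.2 h
  unfold Psi
  field_simp
  ring

theorem Psi_div_sub_of_ne {z x y : ℂ} (hx : z ≠ x) (hy : z ≠ y) (hxy : x ≠ y) :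
    Psi z x / (z - y)
      = -1 + (-x / (z - x)) * (2 * x / (x - y)) + (-y / (z - y)) * ((y + x) / (y - x)) := by
  have := sub_ne_zero.2 hx
  have := sub_ne_zero.2 hy
  have := sub_ne_zero.2 hxy
  have := sub_ne_zero.2 hxy.symm
  unfold Psi
  field_simp
  ring

theorem two_mul_div_sub_add_div_sub {a b : ℂ} (h : a ≠ b) :
    2 * a / (a - b) + (a + b) / (a - b) = 2 * ((a + b) / (a - b)) + 1 := by
  have := sub_ne_zero.2 h
  field_simp
  ring

theorem stmt_4_general (N : ℕ) (x : Fin N → ℂ) (hinj : Function.Injective x)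
    (z : ℂ) (hz : ∀ i, z ≠ x i) :
    ∑ i, ∑ j, Psi z (x j) / (z - x i)
      = ∑ i, (-2 * (x i) ^ 2 / (z - x i) ^ 2)
        + ∑ i, (-(x i) / (z - x i)) *
            (2 * ∑ j ∈ Finset.univ.erase i, (x i + x j) / (x i - x j) + (N : ℂ) + 2)
        - (N : ℂ) ^ 2 := by
  set w : Fin N → ℂ := fun i => -x i / (z - x i)
  set r : Fin N → Fin N → ℂ := fun i j => (x i + x j) / (x i - x j)
  have hne {i j : Fin N} (hj : j ∈ univ.erase i) : x i ≠ x j :=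
    hinj.ne (ne_of_mem_erase hj).symm
  have hcard (i : Fin N) : ((univ.erase i).card : ℂ) + 1 = N := by
    exact_mod_cast (card_erase_add_one (mem_univ i)).trans (card_fin N)
  calc ∑ i, ∑ j, Psi z (x j) / (z - x i)
      = ∑ i, (Psi z (x i) / (z - x i) + ∑ j ∈ univ.erase i,
          (-1 + w i * r i j + w j * (2 * x j / (x j - x i)))) := by
        refine sum_congr rfl fun i _ => ?_
        rw [← add_sum_erase _ _ (mem_univ i)]
        exact congrArg _ <| sum_congr rfl fun j hj =>
          (Psi_div_sub_of_ne (hz j) (hz i) (hne hj).symm).trans (add_right_comm _ _ _)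
    _ = ∑ i, Psi z (x i) / (z - x i) + ∑ i, ∑ j ∈ univ.erase i,
          (-1 + w i * r i j + w i * (2 * x i / (x i - x j))) := by
        rw [sum_add_distrib, sum_sum_erase_add_comm]
    _ = ∑ i, (Psi z (x i) / (z - x i) + ∑ j ∈ univ.erase i,
          (-1 + w i * (2 * r i j + 1))) := by
        rw [← sum_add_distrib]
        refine sum_congr rfl fun i _ => congrArg _ <| sum_congr rfl fun j hj => ?_
        rw [add_assoc, ← mul_add, add_comm (r i j), two_mul_div_sub_add_div_sub (hne hj)]
    _ = ∑ i, (-2 * (x i) ^ 2 / (z - x i) ^ 2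
          + w i * (2 * ∑ j ∈ univ.erase i, r i j + (N : ℂ) + 2) - N) := by
        refine sum_congr rfl fun i _ => ?_
        rw [Psi_div_sub_self (hz i), sum_add_distrib, sum_const, ← mul_sum, sum_add_distrib,
          sum_const, ← mul_sum, nsmul_eq_mul, nsmul_eq_mul, ← hcard i]
        ring
    _ = _ := by
        rw [sum_sub_distrib, sum_add_distrib, sum_const, card_univ, Fintype.card_fin, nsmul_eq_mul]
        ring

theorem stmt_4 (N : ℕ) (hN : 1 ≤ N) (x : Fin N → ℂ) (hinj : Function.Injective x)
    (hx0 : ∀ i, x i ≠ 0) (z : ℂ) (hz : ∀ i, z ≠ x i) :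
    ∑ i, ∑ j, Psi z (x j) / (z - x i)
      = ∑ i, (-2 * (x i) ^ 2 / (z - x i) ^ 2)
        + ∑ i, (-(x i) / (z - x i)) *
            (2 * ∑ j ∈ Finset.univ.erase i, (x i + x j) / (x i - x j) + (N : ℂ) + 2)
        - (N : ℂ) ^ 2 :=
  stmt_4_general N x hinj z hz
end

section
/- Define Λ_t(z) = 4t·z/(1−z)². If t = ((1−h)/(1+h))²·log[(1−h)²z/(h(1−z)²)] (for appropriate branch and h, z in the unit disk, h, z ∉ {0,1}), then Λ_t(h)·exp(Λ_t(h)) = Λ_t(z)·e^{−t}. -/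
/-- `Λ_t(z) = 4 t z / (1-z)^2`. -/
noncomputable def Lam (t : ℝ) (z : ℂ) : ℂ := 4 * (t : ℂ) * z / (1 - z) ^ 2

theorem stmt_15 (t : ℝ) (h z L : ℂ)
    (hh : ‖h‖ < 1) (hz : ‖z‖ < 1)
    (hh0 : h ≠ 0) (hh1 : h ≠ 1) (hhm1 : h ≠ -1) (hz0 : z ≠ 0) (hz1 : z ≠ 1)
    (hL : Complex.exp L = (1 - h) ^ 2 * z / (h * (1 - z) ^ 2))
    (ht : (t : ℂ) = ((1 - h) / (1 + h)) ^ 2 * L) :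
    Lam t h * Complex.exp (Lam t h) = Lam t z * Complex.exp (-(t : ℂ)) := by
  have h1 : (1 : ℂ) - h ≠ 0 := sub_ne_zero.mpr (Ne.symm hh1)
  have h2 : (1 : ℂ) + h ≠ 0 := by
    intro e; apply hhm1; linear_combination e
  have hz1' : (1 : ℂ) - z ≠ 0 := sub_ne_zero.mpr (Ne.symm hz1)
  have key : Lam t h = L - (t : ℂ) := by
    rw [Lam, ht]
    field_simp
    ring
  rw [key, sub_eq_add_neg, Complex.exp_add, hL]
  rw [Lam, ht]
  field_simp
  ring
end

section
/- For 0 < t ≤ 1 and 0 ≤ x ≤ x_t^max (where (x_t^max/2)·tanh(x_t^max/2) = t), define ψ_t(x) = (1/2)·arccos((x/(2t))·sinh x − cosh x). Then ψ_t(x) = arcsin(√(1 − (x/(2t))·tanh(x/2))·cosh(x/2)); in particular ψ_t(x_t^max) = 0 and ψ_t(0) = π/2. -/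
lemma aux_sinh_le (y : ℝ) (hy : 0 ≤ y) : Real.sinh y ≤ y * Real.cosh y := by
  have hderiv : ∀ z : ℝ, HasDerivAt (fun w => w * Real.cosh w - Real.sinh w)
      (z * Real.sinh z) z := by
    intro z
    have h1 := (hasDerivAt_id z).mul (Real.hasDerivAt_cosh z)
    have h2 := Real.hasDerivAt_sinh z
    exact (h1.sub h2).congr_deriv (by simp)
  have mono : MonotoneOn (fun w => w * Real.cosh w - Real.sinh w) (Set.Ici (0:ℝ)) := by
    apply monotoneOn_of_deriv_nonneg (convex_Ici 0)
    · exact (Continuous.continuousOn (by continuity))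
    · intro z _
      exact (hderiv z).differentiableAt.differentiableWithinAt
    · intro z hz
      rw [interior_Ici, Set.mem_Ioi] at hz
      rw [(hderiv z).deriv]
      exact mul_nonneg hz.le (Real.sinh_nonneg_iff.mpr hz.le)
  have h0 := mono (Set.self_mem_Ici) (Set.mem_Ici.mpr hy) hy
  simp only [Real.sinh_zero, Real.cosh_zero, mul_one, zero_mul, sub_zero, zero_sub,
    mul_zero] at h0
  linarith

lemma aux_tanh_mono {a b : ℝ} (hab : a ≤ b) : Real.tanh a ≤ Real.tanh b := by
  rw [Real.tanh_eq_sinh_div_cosh, Real.tanh_eq_sinh_div_cosh,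
    div_le_div_iff₀ (Real.cosh_pos a) (Real.cosh_pos b)]
  have h : Real.sinh (a - b) ≤ 0 := by
    simpa using Real.sinh_le_sinh.mpr (show a - b ≤ (0:ℝ) by linarith)
  rw [Real.sinh_sub] at h
  linarith

lemma aux_tanh_nonneg {a : ℝ} (ha : 0 ≤ a) : 0 ≤ Real.tanh a := by
  rw [Real.tanh_eq_sinh_div_cosh]
  exact div_nonneg (Real.sinh_nonneg_iff.mpr ha) (Real.cosh_pos a).le

lemma aux_arccos (u : ℝ) (h0 : 0 ≤ u) (h1 : u ≤ 1) :
    Real.arccos (1 - 2 * u ^ 2) = 2 * Real.arcsin u := by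
  have hsin : Real.sin (Real.arcsin u) = u := Real.sin_arcsin (by linarith) h1
  have hcos : Real.cos (2 * Real.arcsin u) = 1 - 2 * u ^ 2 := by
    rw [Real.cos_two_mul', Real.cos_sq', hsin]; ring
  rw [← hcos, Real.arccos_cos]
  · have := Real.arcsin_nonneg.mpr h0; linarith
  · have := Real.arcsin_le_pi_div_two u; linarith [Real.pi_pos]

theorem stmt_18 (t xmax : ℝ) (ht0 : 0 < t) (ht1 : t ≤ 1)
    (hxmax : 0 ≤ xmax) (hmax : (xmax / 2) * Real.tanh (xmax / 2) = t)
    (x : ℝ) (hx0 : 0 ≤ x) (hx : x ≤ xmax) :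
    (1 / 2) * Real.arccos ((x / (2 * t)) * Real.sinh x - Real.cosh x)
      = Real.arcsin (Real.sqrt (1 - (x / (2 * t)) * Real.tanh (x / 2)) * Real.cosh (x / 2)) ∧
    (1 / 2) * Real.arccos ((xmax / (2 * t)) * Real.sinh xmax - Real.cosh xmax) = 0 ∧
    (1 / 2) * Real.arccos ((0 / (2 * t)) * Real.sinh 0 - Real.cosh 0) = Real.pi / 2 := by
  have hy0 : 0 ≤ x / 2 := by positivity
  have hcy : (0:ℝ) < Real.cosh (x / 2) := Real.cosh_pos (x / 2)
  have hsy : 0 ≤ Real.sinh (x / 2) := Real.sinh_nonneg_iff.mpr hy0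
  have htanh : Real.tanh (x / 2) * Real.cosh (x / 2) = Real.sinh (x / 2) := by
    rw [Real.tanh_eq_sinh_div_cosh]
    field_simp
  have hpyth : Real.cosh (x / 2) ^ 2 - Real.sinh (x / 2) ^ 2 = 1 :=
    Real.cosh_sq_sub_sinh_sq (x / 2)
  -- s ≥ 0
  have hs : 0 ≤ 1 - (x / (2 * t)) * Real.tanh (x / 2) := by
    have h1 : x * Real.tanh (x / 2) ≤ xmax * Real.tanh (xmax / 2) :=
      mul_le_mul hx (aux_tanh_mono (by linarith)) (aux_tanh_nonneg hy0) hxmax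
    have h2 : xmax * Real.tanh (xmax / 2) = 2 * t := by linarith
    rw [sub_nonneg, div_mul_eq_mul_div, div_le_one (by linarith)]
    linarith
  set u := Real.sqrt (1 - (x / (2 * t)) * Real.tanh (x / 2)) * Real.cosh (x / 2) with hu
  have hu0 : 0 ≤ u := mul_nonneg (Real.sqrt_nonneg _) hcy.le
  have husq : u ^ 2 = (1 - (x / (2 * t)) * Real.tanh (x / 2)) * Real.cosh (x / 2) ^ 2 := by
    rw [hu, mul_pow, Real.sq_sqrt hs]
  -- u ≤ 1
  have hu1 : u ≤ 1 := by
    have key : t * Real.sinh (x / 2) ≤ (x / 2) * Real.cosh (x / 2) :=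
      le_trans (by nlinarith) (aux_sinh_le (x / 2) hy0)
    have hsq1 : u ^ 2 ≤ 1 := by
      have husq' : u ^ 2 = Real.cosh (x / 2) ^ 2
          - (x / (2 * t)) * Real.sinh (x / 2) * Real.cosh (x / 2) := by
        rw [husq]
        linear_combination (-(x / (2 * t)) * Real.cosh (x / 2)) * htanh
      have h3 : Real.sinh (x / 2) ^ 2 ≤ (x / (2 * t)) * Real.sinh (x / 2) * Real.cosh (x / 2) := by
        rw [div_mul_eq_mul_div, div_mul_eq_mul_div, le_div_iff₀ (by linarith : (0:ℝ) < 2 * t)]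
        have hk2 := mul_le_mul_of_nonneg_right key hsy
        nlinarith [hk2]
      nlinarith [husq', h3, hpyth]
    nlinarith
  refine ⟨?_, ?_, ?_⟩
  · -- main identity
    have hA : (x / (2 * t)) * Real.sinh x - Real.cosh x = 1 - 2 * u ^ 2 := by
      have hsx : Real.sinh x = 2 * Real.sinh (x / 2) * Real.cosh (x / 2) := by
        rw [show x = 2 * (x / 2) by ring, Real.sinh_two_mul]
        ring_nf
      have hcx : Real.cosh x = Real.cosh (x / 2) ^ 2 + Real.sinh (x / 2) ^ 2 := by
        rw [show x = 2 * (x / 2) by ring, Real.cosh_two_mul]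
        ring_nf
      rw [hsx, hcx, husq]
      linear_combination hpyth - (x / t * Real.cosh (x / 2)) * htanh
    rw [hA, aux_arccos u hu0 hu1]
    ring
  · -- at xmax
    have hcY : (0:ℝ) < Real.cosh (xmax / 2) := Real.cosh_pos (xmax / 2)
    have htY : Real.tanh (xmax / 2) * Real.cosh (xmax / 2) = Real.sinh (xmax / 2) := by
      rw [Real.tanh_eq_sinh_div_cosh]; field_simp
    have hkey : xmax * Real.sinh (xmax / 2) = 2 * t * Real.cosh (xmax / 2) := by
      rw [← htY]
      linear_combination (2 * Real.cosh (xmax / 2)) * hmax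
    have hA1 : (xmax / (2 * t)) * Real.sinh xmax - Real.cosh xmax = 1 := by
      have hsx : Real.sinh xmax = 2 * Real.sinh (xmax / 2) * Real.cosh (xmax / 2) := by
        rw [show xmax = 2 * (xmax / 2) by ring, Real.sinh_two_mul]
        ring_nf
      have hcx : Real.cosh xmax = Real.cosh (xmax / 2) ^ 2 + Real.sinh (xmax / 2) ^ 2 := by
        rw [show xmax = 2 * (xmax / 2) by ring, Real.cosh_two_mul]
        ring_nf
      have hpythY : Real.cosh (xmax / 2) ^ 2 - Real.sinh (xmax / 2) ^ 2 = 1 :=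
        Real.cosh_sq_sub_sinh_sq (xmax / 2)
      rw [hsx, hcx]
      have h6 : (xmax / (2 * t)) * (2 * Real.sinh (xmax / 2) * Real.cosh (xmax / 2))
          = 2 * Real.cosh (xmax / 2) ^ 2 := by
        rw [div_mul_eq_mul_div, div_eq_iff (by positivity : (2:ℝ) * t ≠ 0)]
        linear_combination (2 * Real.cosh (xmax / 2)) * hkey
      rw [h6]; linarith
    rw [hA1, Real.arccos_one]
    ring
  · rw [show (0 / (2 * t)) * Real.sinh 0 - Real.cosh 0 = -1 by
        simp [Real.sinh_zero, Real.cosh_zero],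
      Real.arccos_neg_one]
    ring
end

section
/- Let F_t(r) = t(1−r²)/(r·log r) + (1+r²)/(2r) for r ∈ (0,1), t > 0. For 0 < t ≤ 1 there is a unique r_t^min ∈ (0,1) with F_t(r_t^min) = 1, characterized by t = −((1−r_t^min)/(2(1+r_t^min)))·log r_t^min; for t > 1 there is additionally a unique r_t^max ∈ (0,1) with F_t(r_t^max) = −1, characterized by t = −((1+r_t^max)/(2(1−r_t^max)))·log r_t^max. -/
open Real Set

/-- `F_t(r) = t (1-r^2)/(r log r) + (1+r^2)/(2r)`. -/
noncomputable def Ffun (t r : ℝ) : ℝ :=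
  t * (1 - r ^ 2) / (r * Real.log r) + (1 + r ^ 2) / (2 * r)

noncomputable def Gfun (r : ℝ) : ℝ := -((1 - r) / (2 * (1 + r))) * Real.log r
noncomputable def Hfun (r : ℝ) : ℝ := -((1 + r) / (2 * (1 - r))) * Real.log r

lemma equiv1 {t r : ℝ} (hr : r ∈ Ioo (0:ℝ) 1) : Ffun t r = 1 ↔ t = Gfun r := by
  obtain ⟨h0, h1⟩ := hr
  have hr0 : r ≠ 0 := ne_of_gt h0
  have hl : Real.log r ≠ 0 := by
    have := Real.log_neg h0 h1; linarith
  have hm : (1:ℝ) - r ≠ 0 := by linarith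
  have hp : (1:ℝ) + r ≠ 0 := by linarith
  have hmr : (1-r)*r ≠ 0 := mul_ne_zero hm hr0
  unfold Ffun Gfun
  rw [div_add_div _ _ (by positivity) (by positivity : (2:ℝ)*r ≠ 0)]
  rw [div_eq_one_iff_eq (by positivity)]
  constructor
  · intro h
    field_simp at h
    have key : t * (2*(1+r)) = -(1-r)*Real.log r := by
      have h2 : (t * (2*(1+r))) * ((1-r)*r) = (-(1-r)*Real.log r) * ((1-r)*r) := by
        linear_combination r * h
      exact mul_right_cancel₀ hmr h2
    field_simp
    linear_combination key
  · intro h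
    subst h
    field_simp
    ring

lemma equiv2 {t r : ℝ} (hr : r ∈ Ioo (0:ℝ) 1) : Ffun t r = -1 ↔ t = Hfun r := by
  obtain ⟨h0, h1⟩ := hr
  have hr0 : r ≠ 0 := ne_of_gt h0
  have hl : Real.log r ≠ 0 := by
    have := Real.log_neg h0 h1; linarith
  have hm : (1:ℝ) - r ≠ 0 := by linarith
  have hp : (1:ℝ) + r ≠ 0 := by linarith
  have hmr : (1+r)*r ≠ 0 := mul_ne_zero hp hr0
  unfold Ffun Hfun
  rw [div_add_div _ _ (by positivity) (by positivity : (2:ℝ)*r ≠ 0)]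
  rw [div_eq_iff (by positivity)]
  constructor
  · intro h
    field_simp at h
    have key : t * (2*(1-r)) = -(1+r)*Real.log r := by
      have h2 : (t * (2*(1-r))) * ((1+r)*r) = (-(1+r)*Real.log r) * ((1+r)*r) := by
        linear_combination r * h
      exact mul_right_cancel₀ hmr h2
    field_simp
    linear_combination key
  · intro h
    subst h
    field_simp
    ring

lemma G_anti : StrictAntiOn Gfun (Ioo (0:ℝ) 1) := by
  intro x hx y hy hxy
  obtain ⟨hx0, hx1⟩ := hx
  obtain ⟨hy0, hy1⟩ := hy
  unfold Gfun
  have hlx : 0 < -Real.log x := by have := Real.log_neg hx0 hx1; linarith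
  have hly : 0 < -Real.log y := by have := Real.log_neg hy0 hy1; linarith
  have hll : -Real.log y < -Real.log x := by
    have := Real.log_lt_log hx0 hxy; linarith
  have h1 : (0:ℝ) < (1 - y) / (2 * (1 + y)) := div_pos (by linarith) (by linarith)
  have h2 : (1 - y) / (2 * (1 + y)) < (1 - x) / (2 * (1 + x)) := by
    rw [div_lt_div_iff₀ (by linarith) (by linarith)]
    nlinarith
  calc -((1 - y) / (2 * (1 + y))) * Real.log y
      = (1 - y) / (2 * (1 + y)) * (-Real.log y) := by ring
    _ < (1 - x) / (2 * (1 + x)) * (-Real.log x) := by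
        apply mul_lt_mul'' h2 hll (le_of_lt h1) (le_of_lt hly)
    _ = -((1 - x) / (2 * (1 + x))) * Real.log x := by ring

lemma aux_log {r : ℝ} (hr : r ∈ Ioo (0:ℝ) 1) : -Real.log r < (1 - r^2)/(2*r) := by
  obtain ⟨h0, h1⟩ := hr
  set f : ℝ → ℝ := fun r => Real.log r + (1 - r^2)/(2*r) with hf
  have hderiv : ∀ x ∈ Ioo (0:ℝ) 1, HasDerivAt f (-(1-x)^2/(2*x^2)) x := by
    intro x ⟨hx0, hx1⟩
    have hx0' : x ≠ 0 := ne_of_gt hx0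
    have h1 : HasDerivAt Real.log x⁻¹ x := Real.hasDerivAt_log hx0'
    have hden : HasDerivAt (fun y : ℝ => 2*y) 2 x := by
      simpa using (hasDerivAt_id x).const_mul 2
    have hnum : HasDerivAt (fun y : ℝ => 1 - y^2) (-(2*x)) x := by
      simpa using (hasDerivAt_pow 2 x).const_sub 1
    have h2 := hnum.div hden (by positivity)
    have := h1.add h2
    refine this.congr_deriv ?_
    field_simp
    ring
  have hanti : StrictAntiOn f (Ioc (0:ℝ) 1) := by
    apply strictAntiOn_of_deriv_neg (convex_Ioc 0 1)
    · apply ContinuousOn.add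
      · exact Real.continuousOn_log.mono (by intro x hx; exact ne_of_gt hx.1)
      · apply ContinuousOn.div (by fun_prop) (by fun_prop)
        intro x hx; have := hx.1; positivity
    · intro x hx
      rw [interior_Ioc] at hx
      rw [(hderiv x hx).deriv]
      have hA : (0:ℝ) < (1-x)^2 := by nlinarith [hx.1, hx.2]
      have hB : (0:ℝ) < 2*x^2 := by nlinarith [hx.1]
      rw [neg_div]
      simp only [Left.neg_neg_iff]
      exact div_pos hA hB
  have := hanti ⟨h0, le_of_lt h1⟩ ⟨zero_lt_one, le_refl 1⟩ h1
  simp only [hf, Real.log_one] at this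
  norm_num at this
  linarith

lemma H_anti : StrictAntiOn Hfun (Ioo (0:ℝ) 1) := by
  apply strictAntiOn_of_deriv_neg (convex_Ioo 0 1)
  · unfold Hfun
    apply ContinuousOn.mul
    · apply ContinuousOn.neg
      apply ContinuousOn.div (by fun_prop) (by fun_prop)
      intro x hx
      rw [mem_Ioo] at hx; intro h; nlinarith [hx.2]
    · exact Real.continuousOn_log.mono (by intro x hx; exact ne_of_gt hx.1)
  · intro x hx
    rw [interior_Ioo] at hx
    obtain ⟨hx0, hx1⟩ := hx
    have hx0' : x ≠ 0 := ne_of_gt hx0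
    have hmx : (0:ℝ) < 1 - x := by linarith
    have hd : HasDerivAt Hfun (-Real.log x/(1-x)^2 - (1+x)/(2*x*(1-x))) x := by
      have hnum : HasDerivAt (fun y : ℝ => 1 + y) 1 x := by
        simpa using (hasDerivAt_id x).const_add 1
      have hden : HasDerivAt (fun y : ℝ => 2*(1-y)) (-2) x := by
        simpa using ((hasDerivAt_id x).const_sub 1).const_mul 2
      have h1 := (hnum.div hden (by positivity)).neg
      have h2 : HasDerivAt Real.log x⁻¹ x := Real.hasDerivAt_log hx0'
      have := h1.mul h2
      refine this.congr_deriv ?_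
      simp only [Pi.neg_apply, Pi.div_apply]
      have hmx' : (1:ℝ) - x ≠ 0 := ne_of_gt hmx
      field_simp
      ring
    rw [hd.deriv]
    have haux : -Real.log x < (1 - x^2)/(2*x) := aux_log ⟨hx0, hx1⟩
    rw [sub_neg]
    rw [div_lt_div_iff₀ (pow_pos hmx 2) (by positivity)]
    have h2x : -Real.log x * (2*x) < 1 - x^2 := by
      calc -Real.log x * (2*x) < (1 - x^2)/(2*x) * (2*x) :=
            mul_lt_mul_of_pos_right haux (by positivity)
        _ = 1 - x^2 := by field_simp
    nlinarith [mul_lt_mul_of_pos_right h2x hmx]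


lemma G_exists {t : ℝ} (ht : 0 < t) : ∃ r ∈ Ioo (0:ℝ) 1, Gfun r = t := by
  set a : ℝ := Real.exp (-(8*t+1)) with ha
  set b : ℝ := Real.exp (-(2*t)) with hb
  have hexp1 : Real.exp (-(1:ℝ)) < 1/2 := by
    rw [Real.exp_neg]
    rw [inv_lt_comm₀ (Real.exp_pos 1) (by norm_num), show ((1:ℝ)/2)⁻¹ = 2 by norm_num]
    calc (2:ℝ) < 2.7182818283 := by norm_num
      _ < Real.exp 1 := Real.exp_one_gt_d9
  have ha0 : 0 < a := Real.exp_pos _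
  have hahalf : a < 1/2 := by
    calc a ≤ Real.exp (-1) := Real.exp_le_exp.mpr (by linarith)
      _ < 1/2 := hexp1
  have hb1 : b < 1 := by
    rw [hb, Real.exp_lt_one_iff]; linarith
  have hb0 : 0 < b := Real.exp_pos _
  have hab : a < b := Real.exp_lt_exp.mpr (by linarith)
  have hcont : ContinuousOn Gfun (Icc a b) := by
    unfold Gfun
    apply ContinuousOn.mul
    · apply ContinuousOn.neg
      apply ContinuousOn.div (by fun_prop) (by fun_prop)
      intro x hx
      have := hx.1; intro h; nlinarith
    · exact Real.continuousOn_log.mono (by intro x hx; exact ne_of_gt (lt_of_lt_of_le ha0 hx.1))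
  have hGa : t ≤ Gfun a := by
    unfold Gfun
    rw [ha, Real.log_exp]
    rw [neg_mul_neg, div_mul_eq_mul_div, le_div_iff₀ (by linarith)]
    nlinarith
  have hGb : Gfun b ≤ t := by
    unfold Gfun
    rw [hb, Real.log_exp]
    rw [neg_mul_neg, div_mul_eq_mul_div, div_le_iff₀ (by linarith)]
    nlinarith
  have := intermediate_value_Icc' (le_of_lt hab) hcont
  have hmem : t ∈ Icc (Gfun b) (Gfun a) := ⟨hGb, hGa⟩
  obtain ⟨r, hr, hrt⟩ := this hmem
  exact ⟨r, ⟨lt_of_lt_of_le ha0 hr.1, lt_of_le_of_lt hr.2 hb1⟩, hrt⟩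

lemma H_exists {t : ℝ} (ht : 1 < t) : ∃ r ∈ Ioo (0:ℝ) 1, Hfun r = t := by
  set a : ℝ := Real.exp (-(2*t)) with ha
  set δ : ℝ := min (1/2) (Real.sqrt (t-1)) with hδ
  set b : ℝ := 1 - δ with hb
  have hδ0 : 0 < δ := lt_min (by norm_num) (Real.sqrt_pos.mpr (by linarith))
  have hδh : δ ≤ 1/2 := min_le_left _ _
  have hδsq : δ^2 ≤ t - 1 := by
    calc δ^2 ≤ (Real.sqrt (t-1))^2 := by
          apply pow_le_pow_left₀ (le_of_lt hδ0) (min_le_right _ _)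
      _ = t - 1 := Real.sq_sqrt (by linarith)
  have hb1 : b < 1 := by rw [hb]; linarith
  have hbh : 1/2 ≤ b := by rw [hb]; linarith
  have hexp2 : Real.exp (-(2:ℝ)) < 1/2 := by
    rw [Real.exp_neg, inv_lt_comm₀ (Real.exp_pos 2) (by norm_num), show ((1:ℝ)/2)⁻¹ = 2 by norm_num]
    calc (2:ℝ) < 2.7182818283 := by norm_num
      _ < Real.exp 1 := Real.exp_one_gt_d9
      _ ≤ Real.exp 2 := Real.exp_le_exp.mpr (by norm_num)
  have ha0 : 0 < a := Real.exp_pos _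
  have hab : a < b := by
    calc a ≤ Real.exp (-2) := Real.exp_le_exp.mpr (by linarith)
      _ < 1/2 := hexp2
      _ ≤ b := hbh
  have hcont : ContinuousOn Hfun (Icc a b) := by
    unfold Hfun
    apply ContinuousOn.mul
    · apply ContinuousOn.neg
      apply ContinuousOn.div (by fun_prop) (by fun_prop)
      intro x hx
      have := hx.2; intro h; nlinarith [lt_of_le_of_lt this hb1]
    · exact Real.continuousOn_log.mono (by intro x hx; exact ne_of_gt (lt_of_lt_of_le ha0 hx.1))
  have hHa : t ≤ Hfun a := by
    unfold Hfun
    rw [ha, Real.log_exp]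
    have ha1 : a < 1 := lt_trans hab hb1
    rw [neg_mul_neg, div_mul_eq_mul_div, le_div_iff₀ (by linarith)]
    nlinarith
  have hHb : Hfun b ≤ t := by
    have hb0 : 0 < b := by linarith
    have haux := aux_log (r := b) ⟨hb0, hb1⟩
    have step1 : Hfun b ≤ (1+b)/(2*(1-b)) * ((1 - b^2)/(2*b)) := by
      unfold Hfun
      rw [neg_mul, ← mul_neg]
      apply mul_le_mul_of_nonneg_left (le_of_lt haux)
      apply div_nonneg (by linarith) (by linarith)
    have step2 : (1+b)/(2*(1-b)) * ((1 - b^2)/(2*b)) = (1+b)^2/(4*b) := by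
      have : (1:ℝ) - b ≠ 0 := by linarith
      field_simp
      ring
    rw [step2] at step1
    have step3 : (1+b)^2/(4*b) ≤ t := by
      rw [div_le_iff₀ (by linarith)]
      have : (1-b)^2 = δ^2 := by rw [hb]; ring
      nlinarith
    linarith
  have := intermediate_value_Icc' (le_of_lt hab) hcont
  obtain ⟨r, hr, hrt⟩ := this ⟨hHb, hHa⟩
  exact ⟨r, ⟨lt_of_lt_of_le ha0 hr.1, lt_of_le_of_lt hr.2 hb1⟩, hrt⟩

theorem stmt_19 :
    (∀ t : ℝ, 0 < t → t ≤ 1 →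
      (∃! r : ℝ, r ∈ Set.Ioo (0 : ℝ) 1 ∧ Ffun t r = 1) ∧
      (∀ r ∈ Set.Ioo (0 : ℝ) 1,
        Ffun t r = 1 ↔ t = -((1 - r) / (2 * (1 + r))) * Real.log r)) ∧
    (∀ t : ℝ, 1 < t →
      (∃! r : ℝ, r ∈ Set.Ioo (0 : ℝ) 1 ∧ Ffun t r = 1) ∧
      (∃! r : ℝ, r ∈ Set.Ioo (0 : ℝ) 1 ∧ Ffun t r = -1) ∧
      (∀ r ∈ Set.Ioo (0 : ℝ) 1,
        Ffun t r = 1 ↔ t = -((1 - r) / (2 * (1 + r))) * Real.log r) ∧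
      (∀ r ∈ Set.Ioo (0 : ℝ) 1,
        Ffun t r = -1 ↔ t = -((1 + r) / (2 * (1 - r))) * Real.log r)) := by
  have main1 : ∀ t : ℝ, 0 < t → ∃! r : ℝ, r ∈ Set.Ioo (0 : ℝ) 1 ∧ Ffun t r = 1 := by
    intro t ht
    obtain ⟨r, hr, hrt⟩ := G_exists ht
    refine ⟨r, ⟨hr, (equiv1 hr).mpr hrt.symm⟩, ?_⟩
    rintro s ⟨hs, hFs⟩
    exact G_anti.injOn hs hr (((equiv1 hs).mp hFs).symm.trans hrt.symm)
  have main2 : ∀ t : ℝ, 1 < t → ∃! r : ℝ, r ∈ Set.Ioo (0 : ℝ) 1 ∧ Ffun t r = -1 := by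
    intro t ht
    obtain ⟨r, hr, hrt⟩ := H_exists ht
    refine ⟨r, ⟨hr, (equiv2 hr).mpr hrt.symm⟩, ?_⟩
    rintro s ⟨hs, hFs⟩
    exact H_anti.injOn hs hr (((equiv2 hs).mp hFs).symm.trans hrt.symm)
  refine ⟨fun t ht _ => ⟨main1 t ht, fun r hr => equiv1 hr⟩,
    fun t ht => ⟨main1 t (by linarith), main2 t ht,
      fun r hr => equiv1 hr, fun r hr => equiv2 hr⟩⟩
end
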